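/- Let ψ : Ŵ → V be an invariant surjection with spinor p. Then for every nonzero isotropic vector v ∈ V there exists a unique 3-dimensional isotropic subspace U ⊆ V such that the image ψ(L_U) equals the line ℂv; moreover, for this U one has v ∈ U. -/

import Mathlib

/-!
The spinor `p` splits `Ŵ = ℂ p ⊕ V·p`, so `u·w·p = -B(u,w)/2 · p + (u × w)·p` with the skew
product `u × w = ψ(u·w·p)` on `V`. Applying `ψ` to the Clifford relation on `z·p` gives
`u × (w × z) + w × (u × z) = -B(u,w) z + B(w,z)/2 u + B(u,z)/2 w`; for isotropic `v ≠ 0` this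
says `v × (v × u) = B(v,u)/2 · v`. Hence `K = ker (v ×)` is a 3-dimensional isotropic subspace
containing `v`, and it is the annihilator of the spinor `v·p`. For any 3-dimensional isotropic
`U` the space `L_U` is a line (each vector of a basis of `U` halves the common kernel, as in a
Fock space), so `L_K = ℂ (v·p)` and `ψ(L_K) = ℂ v`. Conversely, if `ψ(x) = v` with `x ∈ L_U`,
then `v ×` acts on `U` as a scalar whose square vanishes, so `U ≤ K` and `U = K`.
-/

namespace SSD

noncomputable section

/-- `V` is the 7-dimensional complex vector space `ℂ^7`. -/
abbrev V7 : Type := Fin 7 → ℂ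

/-- `Ŵ` is the 8-dimensional spin space, with basis (in this order):
`1, v̂₅, v̂₆, v̂₇, v̂₅v̂₆, v̂₆v̂₇, v̂₅v̂₇, v̂₅v̂₆v̂₇`. -/
abbrev W8 : Type := Fin 8 → ℂ

/-- The constant `1/√2` as a complex number. -/
def is2 : ℂ := ((Real.sqrt 2 : ℝ) : ℂ)⁻¹

/-- The Clifford action of `v ∈ V` on `x ∈ Ŵ`:  `e₅,e₆,e₇` act by exterior
multiplication by `v̂₅,v̂₆,v̂₇`; `e₁,e₂,e₃` act by `−∂/∂v̂₇, ∂/∂v̂₆, −∂/∂v̂₅`;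
`e₄` acts by `(1/√2)·(−1)^deg`. Written out in coordinates. -/
def actFun (v : V7) (x : W8) : W8 := fun k =>
  match k with
  | 0 => -(v 0) * x 3 + v 1 * x 2 - v 2 * x 1 + is2 * v 3 * x 0
  | 1 => v 0 * x 6 - v 1 * x 4 - is2 * v 3 * x 1 + v 4 * x 0
  | 2 => v 0 * x 5 - v 2 * x 4 - is2 * v 3 * x 2 + v 5 * x 0
  | 3 => v 1 * x 5 - v 2 * x 6 - is2 * v 3 * x 3 + v 6 * x 0
  | 4 => -(v 0) * x 7 + is2 * v 3 * x 4 + v 4 * x 2 - v 5 * x 1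
  | 5 => -(v 2) * x 7 + is2 * v 3 * x 5 + v 5 * x 3 - v 6 * x 2
  | 6 => -(v 1) * x 7 + is2 * v 3 * x 6 + v 4 * x 3 - v 6 * x 1
  | 7 => -(is2 * v 3) * x 7 + v 4 * x 5 - v 5 * x 6 + v 6 * x 4

/-- The action `v · x`, packaged as a bilinear map. -/
def act : V7 →ₗ[ℂ] W8 →ₗ[ℂ] W8 :=
  LinearMap.mk₂ ℂ actFun
    (fun m m' n => by funext k; fin_cases k <;> simp [actFun] <;> ring)
    (fun c m n => by funext k; fin_cases k <;> simp [actFun] <;> ring)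
    (fun m n n' => by funext k; fin_cases k <;> simp [actFun] <;> ring)
    (fun c m n => by funext k; fin_cases k <;> simp [actFun] <;> ring)

/-- The bilinear form `B` on `V`: `B(eᵢ,eⱼ) = (−1)^(i+1)` if `i+j=8`, else `0`. -/
def Bform (u w : V7) : ℂ :=
  u 0 * w 6 + u 6 * w 0 - u 1 * w 5 - u 5 * w 1 + u 2 * w 4 + u 4 * w 2 - u 3 * w 3

/-- The quadratic form `Q(v) = B(v,v)/2` on `V`. -/
def Qform (v : V7) : ℂ := Bform v v / 2

/-- The quadratic form `Q̂` on `Ŵ`: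
`Q̂ = α_∅α₅₆₇ + α₆α₅₇ − α₇α₅₆ − α₆₇α₅` in the coordinates of the basis above. -/
def Qhat (x : W8) : ℂ := x 0 * x 7 + x 2 * x 6 - x 3 * x 4 - x 5 * x 1

/-- The bilinear form `B̂(p,q) = Q̂(p+q) − Q̂(p) − Q̂(q)` on `Ŵ`. -/
def Bhat (p q : W8) : ℂ := Qhat (p + q) - Qhat p - Qhat q

/-- A subspace `U ⊆ V` is isotropic if `B` vanishes identically on it. -/
def IsIsotropic (U : Submodule ℂ V7) : Prop :=
  ∀ u ∈ U, ∀ w ∈ U, Bform u w = 0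

/-- `L_U = {x ∈ Ŵ | u·x = 0 for all u ∈ U}`. -/
def LU (U : Submodule ℂ V7) : Submodule ℂ W8 :=
  ⨅ u ∈ U, LinearMap.ker (act u)

/-- `ψ : Ŵ → V` is an invariant surjection with spinor `p` if `p ≠ 0`, `ψ(p)=0`
and `ψ(v·p) = v` for all `v ∈ V`. -/
def IsInvSurj (ψ : W8 →ₗ[ℂ] V7) (p : W8) : Prop :=
  p ≠ 0 ∧ ψ p = 0 ∧ ∀ v : V7, ψ (act v p) = v

open Module Submodule LinearMap

section LinearAlgebra

variable {K M : Type*} [Field K] [AddCommGroup M] [Module K M]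

theorem apply_mem_ker_of_anticomm {A B : Module.End K M} (hAB : A * B = -(B * A)) {x : M}
    (hx : x ∈ ker A) : B x ∈ ker A := by
  rw [mem_ker] at hx ⊢
  simpa [hx] using LinearMap.congr_fun hAB x

variable [FiniteDimensional K M]

theorem finrank_map_add_finrank_inf_ker (f : Module.End K M) (N : Submodule K M) :
    finrank K (N.map f) + finrank K ↥(N ⊓ ker f) = finrank K N := by
  have h := finrank_range_add_finrank_ker (f.domRestrict N)
  rwa [range_domRestrict, ← finrank_map_subtype_eq N, ker_domRestrict, map_comap_subtype] at h

theorem finrank_eq_two_mul_finrank_inf_ker {T S : Module.End K M} (hT : T * T = 0)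
    (hTS : T * S + S * T = 1) {N : Submodule K M} (hTN : ∀ x ∈ N, T x ∈ N)
    (hSN : ∀ x ∈ N, S x ∈ N) : finrank K N = 2 * finrank K ↥(N ⊓ ker T) := by
  have hker : N ⊓ ker T = N.map T := by
    apply le_antisymm
    · rintro x ⟨hxN, hxT⟩
      refine ⟨S x, hSN x hxN, ?_⟩
      simpa [mem_ker.mp hxT] using LinearMap.congr_fun hTS x
    · rintro _ ⟨x, hx, rfl⟩
      exact ⟨hTN x hx, by simpa using LinearMap.congr_fun hT x⟩
  rw [← finrank_map_add_finrank_inf_ker T N, ← hker, two_mul]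

theorem two_pow_card_mul_finrank_biInf_ker {ι : Type*} [DecidableEq ι]
    {T S : ι → Module.End K M} (hT : ∀ i, T i * T i = 0)
    (hTT : ∀ i j, i ≠ j → T i * T j = -(T j * T i))
    (hTS : ∀ i j, T i * S j + S j * T i = if i = j then 1 else 0) (s : Finset ι) :
    2 ^ s.card * finrank K ↥(⨅ i ∈ s, ker (T i)) = finrank K M := by
  induction s using Finset.induction_on with
  | empty =>
    rw [Finset.card_empty, pow_zero, one_mul,
      show ⨅ i ∈ (∅ : Finset ι), ker (T i) = ⊤ by simp, finrank_top]
  | insert a s ha ih =>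
    set N := ⨅ i ∈ s, ker (T i)
    have hne : ∀ i ∈ s, i ≠ a := fun i hi hia => ha (hia ▸ hi)
    have hTN : ∀ x ∈ N, T a x ∈ N := by
      simp only [N, mem_iInf]
      exact fun x hx i hi => apply_mem_ker_of_anticomm (hTT i a (hne i hi)) (hx i hi)
    have hSN : ∀ x ∈ N, S a x ∈ N := by
      simp only [N, mem_iInf]
      refine fun x hx i hi => apply_mem_ker_of_anticomm ?_ (hx i hi)
      simpa [hne i hi, eq_neg_iff_add_eq_zero] using hTS i a
    have hhalf := finrank_eq_two_mul_finrank_inf_ker (hT a)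
      (by simpa using hTS a a) hTN hSN
    rw [Finset.iInf_insert, inf_comm, Finset.card_insert_of_notMem ha, pow_succ, mul_assoc,
      ← hhalf, ih]

theorem exists_dual_family {B : LinearMap.BilinForm K M} (hB : B.Nondegenerate)
    {ι : Type*} [DecidableEq ι] {k : ι → M} (hk : LinearIndependent K k) :
    ∃ w : ι → M, ∀ i j, B (w j) (k i) = if i = j then 1 else 0 := by
  obtain ⟨g, hg⟩ := LinearMap.exists_extend hk.repr
  refine ⟨fun j => (B.toDual hB).symm (Finsupp.lapply j ∘ₗ g), fun i j => ?_⟩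
  have hgk : g (k i) = Finsupp.single i 1 :=
    (LinearMap.congr_fun hg ⟨k i, subset_span ⟨i, rfl⟩⟩).trans (hk.repr_eq_single i _ rfl)
  rw [← LinearMap.BilinForm.toDual_def hB, LinearEquiv.apply_symm_apply, comp_apply, hgk,
    Finsupp.lapply_apply, Finsupp.single_apply]

theorem finrank_range_eq_of_ker_le_range {f : Module.End K M} (h : ker f ≤ range f) :
    finrank K (range f) = finrank K (range (f * f)) + finrank K (ker f) := by
  rw [← finrank_map_add_finrank_inf_ker f (range f), inf_eq_right.mpr h, Module.End.mul_eq_comp,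
    range_comp]

end LinearAlgebra

theorem is2_mul_is2 : is2 * is2 = 2⁻¹ := by
  rw [is2, ← mul_inv, ← Complex.ofReal_mul, Real.mul_self_sqrt zero_le_two]
  norm_num

theorem act_apply (u : V7) (x : W8) : act u x = actFun u x := rfl

theorem act_act_add_act_act (u w : V7) (x : W8) :
    act u (act w x) + act w (act u x) = -Bform u w • x := by
  have hs : is2 ^ 2 = 2⁻¹ := by rw [sq, is2_mul_is2]
  funext k
  simp only [act_apply, Pi.add_apply, Pi.smul_apply, smul_eq_mul]
  fin_cases k <;> simp only [actFun, Bform, Fin.reduceFinMk] <;> ring_nf <;> rw [hs] <;> ring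

theorem act_mul_act_add_act_mul_act (u w : V7) :
    act u * act w + act w * act u = -Bform u w • (1 : Module.End ℂ W8) :=
  LinearMap.ext (act_act_add_act_act u w)

theorem act_act_self (u : V7) (x : W8) : act u (act u x) = -Qform u • x := by
  have h := act_act_add_act_act u u x
  rw [Qform]
  linear_combination (norm := module) (2⁻¹ : ℂ) • h

theorem bform_comm (u w : V7) : Bform u w = Bform w u := by
  simp only [Bform]; ring

theorem exists_bform_ne_zero {u : V7} (hu : u ≠ 0) : ∃ w, Bform u w ≠ 0 := by
  by_contra! H
  have H' : ∀ j, Bform u (Pi.single j 1) = 0 := fun j => H _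
  clear H
  refine hu (funext fun i => ?_)
  fin_cases i <;> simp_all [Fin.forall_fin_succ, Bform, Pi.single_apply]

def bilinForm : LinearMap.BilinForm ℂ V7 :=
  LinearMap.mk₂ ℂ Bform
    (fun _ _ _ => by simp only [Bform, Pi.add_apply]; ring)
    (fun _ _ _ => by simp only [Bform, Pi.smul_apply, smul_eq_mul]; ring)
    (fun _ _ _ => by simp only [Bform, Pi.add_apply]; ring)
    (fun _ _ _ => by simp only [Bform, Pi.smul_apply, smul_eq_mul]; ring)

theorem bilinForm_apply (u w : V7) : bilinForm u w = Bform u w := rfl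

theorem bilinForm_nondegenerate : bilinForm.Nondegenerate :=
  ⟨fun u hu => by_contra fun h0 => (exists_bform_ne_zero h0).elim fun w hw => hw (hu w),
    fun u hu => by_contra fun h0 => (exists_bform_ne_zero h0).elim fun w hw =>
      hw (by rw [bform_comm]; exact hu w)⟩

theorem bhat_comm (x y : W8) : Bhat x y = Bhat y x := by
  simp only [Bhat, Qhat, Pi.add_apply]; ring

theorem bhat_add_left (x x' y : W8) : Bhat (x + x') y = Bhat x y + Bhat x' y := by
  simp only [Bhat, Qhat, Pi.add_apply]; ring

theorem bhat_smul_left (c : ℂ) (x y : W8) : Bhat (c • x) y = c * Bhat x y := by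
  simp only [Bhat, Qhat, Pi.add_apply, Pi.smul_apply, smul_eq_mul]; ring

theorem bhat_act_left (u : V7) (x y : W8) : Bhat (act u x) y = -Bhat x (act u y) := by
  simp only [Bhat, Qhat, act_apply, actFun, Pi.add_apply]; ring

theorem bhat_smul_add_act (c : ℂ) (z : V7) (x : W8) :
    Bhat (c • x + act z x) x = c * Bhat x x := by
  simp only [Bhat, Qhat, act_apply, actFun, Pi.add_apply, Pi.smul_apply, smul_eq_mul]; ring

theorem exists_bhat_ne_zero {x : W8} (hx : x ≠ 0) : ∃ y, Bhat y x ≠ 0 := by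
  by_contra! H
  have H' : ∀ j, Bhat (Pi.single j 1) x = 0 := fun j => H _
  clear H
  refine hx (funext fun i => ?_)
  fin_cases i <;> simp_all [Fin.forall_fin_succ, Bhat, Qhat, Pi.single_apply, add_mul, mul_add]

theorem mem_LU_iff {U : Submodule ℂ V7} {x : W8} : x ∈ LU U ↔ ∀ u ∈ U, act u x = 0 := by
  simp [LU, mem_iInf, mem_ker]

theorem LU_span_range {ι : Type*} [Fintype ι] (k : ι → V7) :
    LU (span ℂ (Set.range k)) = ⨅ i ∈ (Finset.univ : Finset ι), ker (act (k i)) := by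
  ext x
  simp only [mem_LU_iff, mem_iInf, Finset.mem_univ, forall_const, mem_ker]
  refine ⟨fun hx i => hx _ (subset_span ⟨i, rfl⟩), fun hx u hu => ?_⟩
  have hle : span ℂ (Set.range k) ≤ ker (act.flip x) :=
    span_le.mpr (Set.range_subset_iff.mpr hx)
  exact hle hu

theorem finrank_LU_eq_one {U : Submodule ℂ V7} (hU : IsIsotropic U) (h3 : finrank ℂ U = 3) :
    finrank ℂ (LU U) = 1 := by
  let b := finBasisOfFinrankEq ℂ U h3
  let k : Fin 3 → V7 := fun i => b i
  have hk : LinearIndependent ℂ k := b.linearIndependent.map' U.subtype U.ker_subtype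
  have hUk : U = span ℂ (Set.range k) := by
    change U = span ℂ (Set.range (U.subtype ∘ b))
    rw [Set.range_comp, ← Submodule.map_span, b.span_eq, map_subtype_top]
  obtain ⟨w, hw⟩ := exists_dual_family bilinForm_nondegenerate hk
  have hkk : ∀ i j, Bform (k i) (k j) = 0 := fun i j => hU _ (b i).2 _ (b j).2
  have hfock := two_pow_card_mul_finrank_biInf_ker (T := fun i => act (k i))
    (S := fun j => act (-w j)) (fun i => ?_) (fun i j _ => ?_) (fun i j => ?_) Finset.univ
  · rw [← LU_span_range, ← hUk, Finset.card_univ, Fintype.card_fin] at hfock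
    simpa using hfock
  · ext x
    simp [act_act_self, Qform, hkk]
  · rw [eq_neg_iff_add_eq_zero, act_mul_act_add_act_mul_act, hkk, neg_zero, zero_smul]
  · rw [act_mul_act_add_act_mul_act, bform_comm, ← bilinForm_apply, map_neg, LinearMap.neg_apply,
      hw, neg_neg, ite_smul, one_smul, zero_smul]

def cross (ψ : W8 →ₗ[ℂ] V7) (p : W8) : V7 →ₗ[ℂ] V7 →ₗ[ℂ] V7 :=
  (act.compl₂ (act.flip p)).compr₂ ψ

theorem cross_apply (ψ : W8 →ₗ[ℂ] V7) (p : W8) (u w : V7) :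
    cross ψ p u w = ψ (act u (act w p)) := rfl

namespace IsInvSurj

variable {ψ : W8 →ₗ[ℂ] V7} {p : W8}

theorem ker_eq (h : IsInvSurj ψ p) : ker ψ = ℂ ∙ p := by
  have hψ : range ψ = ⊤ := range_eq_top.mpr fun u => ⟨act u p, h.2.2 u⟩
  have hrank := finrank_range_add_finrank_ker ψ
  rw [hψ, finrank_top, finrank_fin_fun, finrank_fin_fun] at hrank
  refine (eq_of_le_of_finrank_eq ((span_singleton_le_iff_mem _ _).mpr h.2.1) ?_).symm
  rw [finrank_span_singleton h.1]
  omega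

theorem exists_eq_smul_add_act (h : IsInvSurj ψ p) (x : W8) :
    ∃ c : ℂ, x = c • p + act (ψ x) p := by
  have hx : x - act (ψ x) p ∈ ker ψ := by rw [mem_ker, map_sub, h.2.2, sub_self]
  rw [h.ker_eq] at hx
  obtain ⟨c, hc⟩ := mem_span_singleton.mp hx
  exact ⟨c, by rw [hc, sub_add_cancel]⟩

theorem eq_zero_of_smul_add_act_eq_zero (h : IsInvSurj ψ p) {c : ℂ} {z : V7}
    (hcz : c • p + act z p = 0) : c = 0 ∧ z = 0 := by
  have hz : z = 0 := by simpa [h.2.1, h.2.2] using congrArg ψ hcz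
  subst hz
  simpa [h.1] using hcz

theorem act_ne_zero (h : IsInvSurj ψ p) {v : V7} (hv0 : v ≠ 0) : act v p ≠ 0 :=
  fun h0 => hv0 (by rw [← h.2.2 v, h0, map_zero])

theorem bhat_self_ne_zero (h : IsInvSurj ψ p) : Bhat p p ≠ 0 := by
  obtain ⟨y, hy⟩ := exists_bhat_ne_zero h.1
  obtain ⟨c, hc⟩ := h.exists_eq_smul_add_act y
  rw [hc, bhat_smul_add_act] at hy
  exact right_ne_zero_of_mul hy

theorem act_act_eq (h : IsInvSurj ψ p) (u w : V7) :
    act u (act w p) = (-Bform u w / 2) • p + act (cross ψ p u w) p := by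
  -- The `p`-coefficient of `x` is `B̂(x,p)/B̂(p,p)`; for `x = u·w·p` it is symmetric in `u, w` by
  -- invariance of `B̂`, and the Clifford relation fixes the sum of the two.
  obtain ⟨c, hc⟩ := h.exists_eq_smul_add_act (act u (act w p))
  have hcomm : Bhat (act u (act w p)) p = Bhat (act w (act u p)) p := by
    rw [bhat_act_left, bhat_act_left, bhat_comm, neg_neg]
  have hsum : Bhat (act u (act w p)) p + Bhat (act w (act u p)) p = -Bform u w * Bhat p p := by
    rw [← bhat_add_left, act_act_add_act_act, bhat_smul_left]
  have hcoeff : c * Bhat p p = -Bform u w / 2 * Bhat p p := by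
    rw [← bhat_smul_add_act c (ψ (act u (act w p))), ← hc]
    linear_combination (hsum + hcomm) / 2
  rw [← mul_right_cancel₀ h.bhat_self_ne_zero hcoeff]
  exact hc

theorem cross_comm (h : IsInvSurj ψ p) (u w : V7) : cross ψ p u w = -cross ψ p w u := by
  have hsum := congrArg ψ (act_act_add_act_act u w p)
  rw [map_add, map_smul, h.2.1, smul_zero] at hsum
  exact eq_neg_of_add_eq_zero_left hsum

theorem cross_self (h : IsInvSurj ψ p) (v : V7) : cross ψ p v v = 0 :=
  self_eq_neg.mp (h.cross_comm v v)

theorem cross_cross_add_cross_cross (h : IsInvSurj ψ p) (u w z : V7) :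
    cross ψ p u (cross ψ p w z) + cross ψ p w (cross ψ p u z) =
      -Bform u w • z + (Bform w z / 2) • u + (Bform u z / 2) • w := by
  have H := congrArg ψ (act_act_add_act_act u w (act z p))
  rw [h.act_act_eq w z, h.act_act_eq u z] at H
  simp only [map_add, map_smul, h.2.2, ← cross_apply] at H
  linear_combination (norm := module) H

end IsInvSurj

section IsotropicVector

variable {ψ : W8 →ₗ[ℂ] V7} {p : W8} {v : V7}

theorem cross_cross_self (h : IsInvSurj ψ p) (hv : Bform v v = 0) (u : V7) :
    cross ψ p v (cross ψ p v u) = (Bform v u / 2) • v := by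
  have H := h.cross_cross_add_cross_cross v v u
  rw [hv] at H
  linear_combination (norm := module) (2⁻¹ : ℂ) • H

theorem bform_eq_zero_of_mem_ker_cross (h : IsInvSurj ψ p) (hv0 : v ≠ 0) (hv : Bform v v = 0)
    {u : V7} (hu : u ∈ ker (cross ψ p v)) : Bform v u = 0 := by
  have H := cross_cross_self h hv u
  rw [mem_ker.mp hu, map_zero, eq_comm, smul_eq_zero] at H
  simpa [hv0] using H

theorem range_cross_mul_cross (h : IsInvSurj ψ p) (hv0 : v ≠ 0) (hv : Bform v v = 0) :
    range (cross ψ p v * cross ψ p v) = ℂ ∙ v := by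
  obtain ⟨u, hu⟩ := exists_bform_ne_zero hv0
  apply le_antisymm
  · rintro _ ⟨y, rfl⟩
    rw [Module.End.mul_apply, cross_cross_self h hv]
    exact smul_mem _ _ (mem_span_singleton_self v)
  · refine (span_singleton_le_iff_mem _ _).mpr ⟨(2 / Bform v u) • u, ?_⟩
    rw [Module.End.mul_apply, map_smul, map_smul, cross_cross_self h hv, smul_smul]
    field_simp
    simp

theorem ker_cross_le_range (h : IsInvSurj ψ p) (hv0 : v ≠ 0) (hv : Bform v v = 0) :
    ker (cross ψ p v) ≤ range (cross ψ p v) := by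
  intro w hw
  obtain ⟨u, hu⟩ := exists_bform_ne_zero hv0
  have hv_range : v ∈ range (cross ψ p v) :=
    range_comp_le_range _ _ ((range_cross_mul_cross h hv0 hv).ge (mem_span_singleton_self v))
  have H := h.cross_cross_add_cross_cross u v w
  rw [mem_ker.mp hw, map_zero, zero_add, bform_eq_zero_of_mem_ker_cross h hv0 hv hw,
    bform_comm u v] at H
  have hw_eq : w = (Bform v u)⁻¹ • ((Bform u w / 2) • v - cross ψ p v (cross ψ p u w)) := by
    rw [H]
    match_scalars <;> field_simp <;> ring
  rw [hw_eq]
  exact smul_mem _ _ (sub_mem (smul_mem _ _ hv_range) (mem_range_self _ _))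

theorem finrank_ker_cross (h : IsInvSurj ψ p) (hv0 : v ≠ 0) (hv : Bform v v = 0) :
    finrank ℂ (ker (cross ψ p v)) = 3 := by
  have hrank := finrank_range_add_finrank_ker (cross ψ p v)
  have hsplit := finrank_range_eq_of_ker_le_range (ker_cross_le_range h hv0 hv)
  rw [range_cross_mul_cross h hv0 hv, finrank_span_singleton hv0] at hsplit
  simp only [finrank_fin_fun] at hrank
  omega

theorem mem_ker_cross_iff (h : IsInvSurj ψ p) (hv0 : v ≠ 0) (hv : Bform v v = 0) {u : V7} :
    u ∈ ker (cross ψ p v) ↔ act u (act v p) = 0 := by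
  rw [h.act_act_eq u v, h.cross_comm u v, mem_ker]
  refine ⟨fun hu => ?_, fun hu => ?_⟩
  · have hB := bform_eq_zero_of_mem_ker_cross h hv0 hv hu
    rw [bform_comm] at hB
    simp [hu, hB]
  · exact neg_eq_zero.mp (h.eq_zero_of_smul_add_act_eq_zero hu).2

theorem isIsotropic_ker_cross (h : IsInvSurj ψ p) (hv0 : v ≠ 0) (hv : Bform v v = 0) :
    IsIsotropic (ker (cross ψ p v)) := by
  intro u hu w hw
  have H := act_act_add_act_act u w (act v p)
  rw [(mem_ker_cross_iff h hv0 hv).mp hu, (mem_ker_cross_iff h hv0 hv).mp hw, map_zero,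
    map_zero, add_zero, eq_comm, smul_eq_zero] at H
  simpa [h.act_ne_zero hv0] using H

theorem map_LU_ker_cross (h : IsInvSurj ψ p) (hv0 : v ≠ 0) (hv : Bform v v = 0) :
    map ψ (LU (ker (cross ψ p v))) = ℂ ∙ v := by
  have hLU : (ℂ ∙ act v p) = LU (ker (cross ψ p v)) := by
    refine eq_of_le_of_finrank_eq ((span_singleton_le_iff_mem _ _).mpr ?_) ?_
    · exact mem_LU_iff.mpr fun u hu => (mem_ker_cross_iff h hv0 hv).mp hu
    · rw [finrank_span_singleton (h.act_ne_zero hv0),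
        finrank_LU_eq_one (isIsotropic_ker_cross h hv0 hv) (finrank_ker_cross h hv0 hv)]
  rw [← hLU, Submodule.map_span, Set.image_singleton, h.2.2]

theorem le_ker_cross_of_mem_map_LU (h : IsInvSurj ψ p) (hv : Bform v v = 0)
    {U : Submodule ℂ V7} (hU : U ≠ ⊥) (hvU : v ∈ map ψ (LU U)) :
    U ≤ ker (cross ψ p v) := by
  obtain ⟨x, hxU, hxv⟩ := hvU
  obtain ⟨a, ha⟩ := h.exists_eq_smul_add_act x
  rw [hxv] at ha
  have heigen : ∀ u ∈ U, Bform v u = 0 ∧ cross ψ p v u = a • u := by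
    intro u hu
    have hux := mem_LU_iff.mp hxU u hu
    rw [ha, map_add, map_smul, h.act_act_eq u v] at hux
    have hdecomp : (-Bform u v / 2) • p + act (a • u + cross ψ p u v) p = 0 := by
      rw [map_add, map_smul, LinearMap.add_apply, LinearMap.smul_apply]
      linear_combination (norm := module) hux
    obtain ⟨hB, hc⟩ := h.eq_zero_of_smul_add_act_eq_zero hdecomp
    refine ⟨by rw [bform_comm]; simpa using hB, ?_⟩
    rw [h.cross_comm]
    linear_combination (norm := module) -hc
  obtain ⟨u₀, hu₀, hu₀0⟩ := exists_mem_ne_zero_of_ne_bot hU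
  have ha0 : a = 0 := by
    have H := cross_cross_self h hv u₀
    rw [(heigen u₀ hu₀).2, map_smul, (heigen u₀ hu₀).2, (heigen u₀ hu₀).1, zero_div,
      zero_smul, smul_smul, smul_eq_zero] at H
    simpa [hu₀0] using H
  intro u hu
  rw [mem_ker, (heigen u hu).2, ha0, zero_smul]

theorem eq_ker_cross_of_map_LU_eq (h : IsInvSurj ψ p) (hv0 : v ≠ 0) (hv : Bform v v = 0)
    {U : Submodule ℂ V7} (hU3 : finrank ℂ U = 3) (hUv : map ψ (LU U) = ℂ ∙ v) :
    U = ker (cross ψ p v) := by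
  have hU : U ≠ ⊥ := by
    rintro rfl
    simp at hU3
  refine eq_of_le_of_finrank_eq (le_ker_cross_of_mem_map_LU h hv hU ?_)
    (hU3.trans (finrank_ker_cross h hv0 hv).symm)
  rw [hUv]
  exact mem_span_singleton_self v

end IsotropicVector

/-- for an invariant surjection `ψ` with spinor `p` and a nonzero
isotropic `v ∈ V`, there is a unique 3-dimensional isotropic `U ⊆ V` with
`ψ(L_U) = ℂv`; moreover `v ∈ U` for this `U`. -/
theorem statement_11 (ψ : W8 →ₗ[ℂ] V7) (p : W8) (h : IsInvSurj ψ p)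
    (v : V7) (hv : v ≠ 0) (hq : Qform v = 0) :
    (∃! U : Submodule ℂ V7, Module.finrank ℂ U = 3 ∧ IsIsotropic U ∧
      Submodule.map ψ (LU U) = Submodule.span ℂ {v}) ∧
    (∀ U : Submodule ℂ V7, Module.finrank ℂ U = 3 → IsIsotropic U →
      Submodule.map ψ (LU U) = Submodule.span ℂ {v} → v ∈ U) := by
  have hvv : Bform v v = 0 := by simpa [Qform] using hq
  refine ⟨⟨ker (cross ψ p v), ⟨finrank_ker_cross h hv hvv, isIsotropic_ker_cross h hv hvv,
    map_LU_ker_cross h hv hvv⟩, fun U hU => eq_ker_cross_of_map_LU_eq h hv hvv hU.1 hU.2.2⟩,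
    fun U hU3 _ hUv => ?_⟩
  rw [eq_ker_cross_of_map_LU_eq h hv hvv hU3 hUv, mem_ker]
  exact h.cross_self v

end

end SSD
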